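/- arXiv:2512.18352 — 7 statements merged into one kernel-verified Lean document; each statement's English description precedes it below -/
import Mathlib

section
/- Let S and A be nonempty finite types. Define the conditional-entropy functional H̄ : (S × A → ℝ) → ℝ by H̄(ρ) = −∑_{(s,a)} ρ(s,a) · log( ρ(s,a) / ∑_{a'} ρ(s,a') ). Then H̄ is concave on the set of strictly positive functions {ρ : S × A → ℝ | ∀ (s,a), ρ(s,a) > 0} (equivalently, −H̄ is convex on this set). -/
/-- Log-sum inequality / two-point convexity of `(x, y) ↦ x * log (x / y)`. -/
lemma entropy_key (x1 x2 y1 y2 a b : ℝ) (hx1 : 0 < x1) (hx2 : 0 < x2)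
    (hy1 : 0 < y1) (hy2 : 0 < y2) (ha : 0 ≤ a) (hb : 0 ≤ b) (hab : a + b = 1) :
    (a*x1 + b*x2) * Real.log ((a*x1+b*x2)/(a*y1+b*y2)) ≤
      a*(x1*Real.log (x1/y1)) + b*(x2*Real.log (x2/y2)) := by
  have hY : 0 < a*y1 + b*y2 := by
    rcases eq_or_lt_of_le ha with h|h
    · have : b = 1 := by linarith
      nlinarith
    · nlinarith [mul_nonneg hb hy2.le]
  have h1 : (0:ℝ) ≤ a*y1/(a*y1+b*y2) := by positivity
  have h2 : (0:ℝ) ≤ b*y2/(a*y1+b*y2) := by positivity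
  have hsum : a*y1/(a*y1+b*y2) + b*y2/(a*y1+b*y2) = 1 := by field_simp
  have hc := Real.convexOn_mul_log.2 (Set.mem_Ici.2 (div_nonneg hx1.le hy1.le))
    (Set.mem_Ici.2 (div_nonneg hx2.le hy2.le)) h1 h2 hsum
  simp only [smul_eq_mul] at hc
  have e1 : a*y1/(a*y1+b*y2) * (x1/y1) + b*y2/(a*y1+b*y2) * (x2/y2)
      = (a*x1+b*x2)/(a*y1+b*y2) := by field_simp
  rw [e1] at hc
  have hmul := mul_le_mul_of_nonneg_left hc hY.le
  calc (a*x1 + b*x2) * Real.log ((a*x1+b*x2)/(a*y1+b*y2))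
      = (a*y1+b*y2) * ((a*x1+b*x2)/(a*y1+b*y2) * Real.log ((a*x1+b*x2)/(a*y1+b*y2))) := by
        field_simp
    _ ≤ (a*y1+b*y2) * (a*y1/(a*y1+b*y2) * (x1/y1 * Real.log (x1/y1))
          + b*y2/(a*y1+b*y2) * (x2/y2 * Real.log (x2/y2))) := hmul
    _ = a*(x1*Real.log (x1/y1)) + b*(x2*Real.log (x2/y2)) := by field_simp

/-- The conditional-entropy functional
`H̄(ρ) = −∑_{(s,a)} ρ(s,a) · log(ρ(s,a) / ∑_{a'} ρ(s,a'))`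
is concave on the set of strictly positive functions on `S × A`. -/
theorem entropy_functional_concave
    (S A : Type*) [Fintype S] [Fintype A] [Nonempty S] [Nonempty A] :
    ConcaveOn ℝ {ρ : S × A → ℝ | ∀ p : S × A, 0 < ρ p}
      (fun ρ : S × A → ℝ =>
        -∑ p : S × A, ρ p * Real.log (ρ p / ∑ a' : A, ρ (p.1, a'))) := by
  have hconv : Convex ℝ {ρ : S × A → ℝ | ∀ p : S × A, 0 < ρ p} := by
    intro ρ hρ η hη a b ha hb hab p
    rcases eq_or_lt_of_le ha with h|h
    · have hb1 : b = 1 := by linarith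
      simpa [← h, hb1] using hη p
    · have : 0 ≤ b * η p := mul_nonneg hb (hη p).le
      have : 0 < a * ρ p := mul_pos h (hρ p)
      simp only [Pi.add_apply, Pi.smul_apply, smul_eq_mul]
      nlinarith [mul_nonneg hb (hη p).le]
  have hg : ConvexOn ℝ {ρ : S × A → ℝ | ∀ p : S × A, 0 < ρ p}
      (fun ρ : S × A → ℝ =>
        ∑ p : S × A, ρ p * Real.log (ρ p / ∑ a' : A, ρ (p.1, a'))) := by
    refine ⟨hconv, ?_⟩
    intro ρ hρ η hη a b ha hb hab
    simp only [smul_eq_mul, Finset.mul_sum, ← Finset.sum_add_distrib]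
    refine Finset.sum_le_sum fun p _ => ?_
    have hy1 : 0 < ∑ a' : A, ρ (p.1, a') :=
      Finset.sum_pos (fun a' _ => hρ (p.1, a')) Finset.univ_nonempty
    have hy2 : 0 < ∑ a' : A, η (p.1, a') :=
      Finset.sum_pos (fun a' _ => hη (p.1, a')) Finset.univ_nonempty
    have hsum : (∑ x : A, (a * ρ (p.1, x) + b * η (p.1, x)))
        = a * (∑ a' : A, ρ (p.1, a')) + b * (∑ a' : A, η (p.1, a')) := by
      simp [Finset.mul_sum, Finset.sum_add_distrib]
    simp only [Pi.add_apply, Pi.smul_apply, smul_eq_mul]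
    rw [hsum]
    exact entropy_key (ρ p) (η p) (∑ a' : A, ρ (p.1, a')) (∑ a' : A, η (p.1, a'))
      a b (hρ p) (hη p) hy1 hy2 ha hb hab
  exact hg.neg
end

section
/- Let φ : ℝ → ℝ be strictly decreasing (strictly antitone) and convex, and let g : ℝ → ℝ satisfy g(φ(x)) = x for all x ∈ ℝ (so g restricts to the inverse of φ on its range T = Set.range φ). Then the map x ↦ φ(−g(x)) is convex on T, i.e., ConvexOn ℝ (Set.range φ) (fun x => φ(−g(x))). -/
/-!
On `T` the inverse `g` of the decreasing convex function `φ` is convex: if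
`φ c = t φ a + s φ b ≥ φ (t a + s b)` then `c ≤ t a + s b`. The map `y ↦ φ (-y)` is convex and
increasing, and a convex increasing function of a convex function is convex.
-/

open Set Function

theorem StrictAnti.convexOn_range_of_leftInverse {𝕜 β : Type*} [Semiring 𝕜] [LinearOrder 𝕜]
    [AddCommMonoid β] [PartialOrder β] [SMul 𝕜 β] {φ : 𝕜 → β} {g : β → 𝕜}
    (hφ : StrictAnti φ) (hφ_conv : ConvexOn 𝕜 univ φ) (hrange : Convex 𝕜 (range φ))
    (hg : LeftInverse g φ) : ConvexOn 𝕜 (range φ) g := by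
  refine ⟨hrange, ?_⟩
  rintro _ ⟨x, rfl⟩ _ ⟨y, rfl⟩ a b ha hb hab
  obtain ⟨c, hc⟩ := hrange (mem_range_self x) (mem_range_self y) ha hb hab
  rw [← hc, hg, hg, hg]
  exact hφ.le_iff_ge.mp (hc ▸ hφ_conv.2 trivial trivial ha hb hab)

/-- If `φ : ℝ → ℝ` is strictly decreasing and convex, and `g` is a left inverse of `φ`
(so `g` restricts to the inverse of `φ` on its range `T = Set.range φ`), then the map
`x ↦ φ(−g(x))` (i.e. `x ↦ φ(−φ⁻¹(x))` on `T`) is convex on `T`. -/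
theorem phi_neg_inv_convexOn
    (φ g : ℝ → ℝ) (hφ_anti : StrictAnti φ) (hφ_conv : ConvexOn ℝ Set.univ φ)
    (hg : ∀ x : ℝ, g (φ x) = x) :
    ConvexOn ℝ (Set.range φ) (fun x => φ (-g x)) := by
  have hφ_cont : Continuous φ := continuousOn_univ.mp (hφ_conv.continuousOn isOpen_univ)
  have hg_conv : ConvexOn ℝ (range φ) g :=
    hφ_anti.convexOn_range_of_leftInverse hφ_conv (isPreconnected_range hφ_cont).convex hg
  have hg_image : g '' range φ = univ := by
    rw [← range_comp, show g ∘ φ = id from funext hg, range_id]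
  have hψ_conv : ConvexOn ℝ (g '' range φ) (fun y => φ (-y)) :=
    hg_image ▸ hφ_conv.comp_linearMap (-LinearMap.id)
  have hψ_mono : Monotone (fun y => φ (-y)) := fun _ _ h ↦ hφ_anti.antitone (neg_le_neg h)
  exact hψ_conv.comp hg_conv (hψ_mono.monotoneOn _)
end

section
/- Let φ : ℝ → ℝ be strictly decreasing (strictly antitone) and convex with Set.range φ = Set.Ioi b for some b : ℝ, and let g : ℝ → ℝ satisfy g(φ(x)) = x for all x ∈ ℝ (so g restricts to the inverse of φ on (b, ∞)). Then g_φ(x) = x + φ(−g(x)) tends to +∞ as x tends to b from the right, i.e., Filter.Tendsto (fun x => x + φ(−g(x))) (nhdsWithin b (Set.Ioi b)) Filter.atTop. -/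
/-- If `φ : ℝ → ℝ` is strictly decreasing and convex with range `(b, ∞)`, and `g` is a
left inverse of `φ` (so `g` restricts to the inverse of `φ` on `(b, ∞)`), then the
regularizer `g_φ(x) = x + φ(−g(x))` tends to `+∞` as `x → b` from the right. -/
theorem g_phi_tendsto_atTop_of_range_Ioi
    (φ g : ℝ → ℝ) (b : ℝ) (hφ_anti : StrictAnti φ) (hφ_conv : ConvexOn ℝ Set.univ φ)
    (hrange : Set.range φ = Set.Ioi b) (hg : ∀ x : ℝ, g (φ x) = x) :
    Filter.Tendsto (fun x => x + φ (-g x)) (nhdsWithin b (Set.Ioi b)) Filter.atTop := by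
  -- φ tends to +∞ at -∞
  have hA : Filter.Tendsto φ Filter.atBot Filter.atTop := by
    rw [Filter.tendsto_atTop]
    intro N
    have hmem : max N b + 1 ∈ Set.range φ := by
      rw [hrange]; exact lt_of_le_of_lt (le_max_right N b) (lt_add_one _)
    obtain ⟨y₀, hy₀⟩ := hmem
    filter_upwards [Filter.eventually_le_atBot y₀] with z hz
    have := hφ_anti.antitone hz
    rw [hy₀] at this
    linarith [le_max_left N b]
  -- g tends to +∞ as x → b⁺
  have hB : Filter.Tendsto g (nhdsWithin b (Set.Ioi b)) Filter.atTop := by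
    rw [Filter.tendsto_atTop]
    intro M
    have hφM : b < φ M := by
      have : φ M ∈ Set.range φ := ⟨M, rfl⟩
      rwa [hrange] at this
    filter_upwards [Ioo_mem_nhdsGT_of_mem (Set.mem_Ico.2 ⟨le_refl b, hφM⟩)] with x hx
    have hxr : x ∈ Set.range φ := by rw [hrange]; exact hx.1
    obtain ⟨y, hy⟩ := hxr
    have hyM : M ≤ y := by
      by_contra h
      push_neg at h
      have := hφ_anti h
      rw [hy] at this
      exact absurd hx.2 (not_lt.2 this.le)
    rw [← hy, hg]
    exact hyM
  have hC : Filter.Tendsto (fun x => φ (-g x)) (nhdsWithin b (Set.Ioi b)) Filter.atTop :=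
    hA.comp (Filter.tendsto_neg_atBot_iff.mpr hB)
  have hD : ∀ᶠ x in nhdsWithin b (Set.Ioi b), b ≤ x := by
    filter_upwards [self_mem_nhdsWithin] with x hx using le_of_lt hx
  exact Filter.tendsto_atTop_add_left_of_le' _ b hD hC
end

section
/- Let φ : ℝ → ℝ be strictly decreasing (strictly antitone) and convex, and let g : ℝ → ℝ satisfy g(φ(x)) = x for all x ∈ ℝ (so g restricts to the inverse of φ on its range T = Set.range φ). Define the extended-real-valued function G : ℝ → EReal by G(x) = ((x + φ(−g(x)) : ℝ) : EReal) if x ∈ T and G(x) = ⊤ otherwise. Then G is lower semicontinuous on ℝ. -/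
open Classical in
/-- If `φ : ℝ → ℝ` is strictly decreasing and convex, and `g` is a left inverse of `φ`
(so `g` restricts to the inverse of `φ` on `T = Set.range φ`), then the extension of
the regularizer `g_φ(x) = x + φ(−g(x))` by `+∞` outside `T` is lower semicontinuous;
i.e. `g_φ` is a closed, proper convex function. -/
theorem g_phi_extension_lowerSemicontinuous
    (φ g : ℝ → ℝ) (hφ_anti : StrictAnti φ) (hφ_conv : ConvexOn ℝ Set.univ φ)
    (hg : ∀ x : ℝ, g (φ x) = x) :
    LowerSemicontinuous (fun x : ℝ =>
      if x ∈ Set.range φ then ((x + φ (-g x) : ℝ) : EReal) else (⊤ : EReal)) := by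
  have hφc : Continuous φ :=
    continuousOn_univ.mp (hφ_conv.continuousOn isOpen_univ)
  -- φ tends to +∞ at -∞
  have hcpos : 0 < φ (-1) - φ 0 := by
    have := hφ_anti (show (-1 : ℝ) < 0 by norm_num)
    linarith
  have hbound : ∀ x : ℝ, x ≤ -1 → (-x) * (φ (-1) - φ 0) + φ 0 ≤ φ x := by
    intro x hx
    have hx0 : x < 0 := by linarith
    have hxne : x ≠ 0 := ne_of_lt hx0
    have hs : (0:ℝ) < -1/x := div_pos_of_neg_of_neg (by norm_num) hx0
    have hs1 : -1/x + (1 - (-1/x)) = 1 := by ring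
    have hs2 : (1 : ℝ) - (-1/x) ≥ 0 := by
      have : -1/x ≤ 1 := by
        rw [div_le_iff_of_neg hx0]
        linarith
      linarith
    have hcomb := hφ_conv.2 (Set.mem_univ x) (Set.mem_univ 0) hs.le hs2 hs1
    have hxeq : (-1/x) • x + (1 - (-1/x)) • (0:ℝ) = -1 := by
      rw [smul_eq_mul, smul_eq_mul, mul_zero, add_zero, div_mul_eq_mul_div,
        neg_one_mul, neg_div, div_self hxne]
    rw [hxeq] at hcomb
    simp only [smul_eq_mul, mul_zero, add_zero] at hcomb
    have h2 : (-1/x) * x * φ x = -φ x := by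
      rw [div_mul_eq_mul_div, neg_one_mul, neg_div, div_self hxne]; ring
    have h3 : (-1/x) * x * φ 0 = -φ 0 := by
      rw [div_mul_eq_mul_div, neg_one_mul, neg_div, div_self hxne]; ring
    have hmul := mul_le_mul_of_nonneg_left hcomb (show (0:ℝ) ≤ -x by linarith)
    nlinarith [hmul, h2, h3]
  have htop : Filter.Tendsto φ Filter.atBot Filter.atTop := by
    have h1 : Filter.Tendsto (fun x : ℝ => (-x) * (φ (-1) - φ 0) + φ 0)
        Filter.atBot Filter.atTop :=
      Filter.tendsto_atTop_add_const_right _ _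
        (Filter.tendsto_neg_atBot_atTop.atTop_mul_const hcpos)
    refine Filter.tendsto_atTop_mono' _ ?_ h1
    filter_upwards [Filter.eventually_le_atBot (-1 : ℝ)] with x hx
    exact hbound x hx
  intro y
  by_cases hy : y ∈ Set.range φ
  · -- y in the range: the function is continuous near y
    obtain ⟨u₀, hu₀⟩ := hy
    -- range φ is a neighborhood of y
    have hIoo : Set.Ioo (φ (u₀ + 1)) (φ (u₀ - 1)) ⊆ Set.range φ := by
      intro x hx
      have hle : u₀ - 1 ≤ u₀ + 1 := by linarith
      obtain ⟨u, _, hu⟩ := intermediate_value_Icc' hle hφc.continuousOn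
        (Set.mem_Icc.mpr ⟨hx.1.le, hx.2.le⟩)
      exact ⟨u, hu⟩
    have hmemIoo : y ∈ Set.Ioo (φ (u₀ + 1)) (φ (u₀ - 1)) := by
      rw [← hu₀]
      exact ⟨hφ_anti (by linarith), hφ_anti (by linarith)⟩
    have hTnhds : Set.range φ ∈ nhds y := Filter.mem_of_superset
      (Ioo_mem_nhds hmemIoo.1 hmemIoo.2) hIoo
    -- g is continuous at y
    have hgy : g y = u₀ := by rw [← hu₀, hg]
    have hgcont : ContinuousAt g y := by
      rw [Metric.continuousAt_iff]
      intro ε hε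
      set ε' := min (ε/2) 1 with hε'
      have hε'pos : 0 < ε' := lt_min (by linarith) one_pos
      have hε'le : ε' < ε := lt_of_le_of_lt (min_le_left _ _) (by linarith)
      have h1 : φ (u₀ + ε') < y := hu₀ ▸ hφ_anti (by linarith)
      have h2 : y < φ (u₀ - ε') := hu₀ ▸ hφ_anti (by linarith)
      refine ⟨min (y - φ (u₀ + ε')) (φ (u₀ - ε') - y),
        lt_min (by linarith) (by linarith), ?_⟩
      intro x hx
      rw [Real.dist_eq] at hx
      obtain ⟨ha1, ha2⟩ := abs_lt.mp hx
      have hm1 := min_le_left (y - φ (u₀ + ε')) (φ (u₀ - ε') - y)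
      have hm2 := min_le_right (y - φ (u₀ + ε')) (φ (u₀ - ε') - y)
      have hx1 : φ (u₀ + ε') < x := by linarith
      have hx2 : x < φ (u₀ - ε') := by linarith
      have hle : u₀ - ε' ≤ u₀ + ε' := by linarith
      obtain ⟨u, hu_mem, hu⟩ := intermediate_value_Icc' hle hφc.continuousOn
        (Set.mem_Icc.mpr ⟨hx1.le, hx2.le⟩)
      rw [Set.mem_Icc] at hu_mem
      obtain ⟨hb1, hb2⟩ := hu_mem
      rw [← hu, hg, Real.dist_eq, hgy, abs_lt]
      constructor <;> linarith
    -- the real-valued function is continuous at y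
    have hhc : ContinuousAt (fun x : ℝ => x + φ (-g x)) y :=
      continuousAt_id.add (hφc.continuousAt.comp hgcont.neg)
    intro c hc
    beta_reduce at hc
    rw [if_pos ⟨u₀, hu₀⟩] at hc
    have hcoe : ContinuousAt (fun x : ℝ => ((x + φ (-g x) : ℝ) : EReal)) y :=
      (continuous_coe_real_ereal.continuousAt).comp hhc
    have hopen : IsOpen {z : EReal | c < z} := isOpen_Ioi
    have hnhds : {z : EReal | c < z} ∈ nhds ((y + φ (-g y) : ℝ) : EReal) :=
      hopen.mem_nhds hc
    have hev := hcoe.preimage_mem_nhds hnhds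
    filter_upwards [hev, hTnhds] with x hx hxT
    rw [if_pos hxT]
    exact hx
  · -- y not in the range: function is ⊤ at y, and blows up nearby
    -- y is a strict lower bound of the range
    have hlb : ∀ u : ℝ, y < φ u := by
      intro u
      by_contra hcon
      push_neg at hcon
      have hlt : φ u < y := lt_of_le_of_ne hcon (fun h => hy ⟨u, h⟩)
      obtain ⟨v, hv⟩ := (htop.eventually_ge_atTop y).exists
      have hvu : v < u := by
        by_contra hvu
        push_neg at hvu
        rcases eq_or_lt_of_le hvu with h | h
        · rw [← h] at hv; linarith
        · have := hφ_anti h; linarith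
      obtain ⟨w, _, hw⟩ := intermediate_value_Icc' hvu.le hφc.continuousOn
        (Set.mem_Icc.mpr ⟨hlt.le, hv⟩)
      exact hy ⟨w, hw⟩
    intro c hc
    beta_reduce at hc
    rw [if_neg hy] at hc
    obtain ⟨r, hcr, -⟩ := EReal.exists_between_coe_real hc
    -- find u₀ such that φ (-u) is large for u ≥ u₀
    have htop' : Filter.Tendsto (fun u : ℝ => φ (-u)) Filter.atTop Filter.atTop :=
      htop.comp Filter.tendsto_neg_atTop_atBot
    obtain ⟨u₀, hu₀⟩ := (htop'.eventually_ge_atTop (r - y + 1)).exists_forall_of_atTop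
    set δ := min (φ u₀ - y) 1 with hδ
    have hδ1 : δ ≤ φ u₀ - y := min_le_left _ _
    have hδ2 : δ ≤ 1 := min_le_right _ _
    have hδpos : 0 < δ := lt_min (by linarith [hlb u₀]) one_pos
    filter_upwards [Ioo_mem_nhds (show y - δ < y by linarith) (show y < y + δ by linarith)]
      with x hx
    by_cases hxT : x ∈ Set.range φ
    · rw [if_pos hxT]
      obtain ⟨u, hu⟩ := hxT
      have hgu : g x = u := by rw [← hu, hg]
      have huu₀ : u₀ ≤ u := by
        by_contra hcon
        push_neg at hcon
        have hmono := hφ_anti hcon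
        have hxlt : x < y + δ := hx.2
        rw [← hu] at hxlt
        linarith
      have hφu : r - y + 1 ≤ φ (-u) := hu₀ u huu₀
      have hxgt : y - 1 < x := by linarith [hx.1]
      have hfin : r < x + φ (-g x) := by
        rw [hgu]; linarith
      calc c < (r : EReal) := hcr
        _ < ((x + φ (-g x) : ℝ) : EReal) := by exact_mod_cast hfin
    · rw [if_neg hxT]
      exact hc
end

section
/- Let ι be a finite type, let φ : ℝ → ℝ, and let g : ℝ → ℝ satisfy g(φ(x)) = x for all x ∈ ℝ. Let ρ_π, ρ_E : ι → ℝ with ρ_π(i) ≥ 0 and ρ_E(i) ≥ 0 for all i. Then, with suprema and sums taken in EReal: ⨆ (r : ι → ℝ) (_ : ∀ i, r i ∈ Set.range φ), ((∑ i, ((ρ_E i − ρ_π i) * r i − ρ_E i * (r i + φ(−g(r i)))) : ℝ) : EReal) = ∑ i, ⨆ (γ : ℝ), ((ρ_π i * (−φ(γ)) − ρ_E i * φ(−γ) : ℝ) : EReal). In particular, ψ_φ*(ρ_π − ρ_E) = −R_φ(ρ_π, ρ_E). -/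
lemma iSup_coe_add_iSup_coe {α β : Type*} [Nonempty α] [Nonempty β]
    (f : α → ℝ) (h : β → ℝ) :
    (⨆ x, ((f x : EReal))) + ⨆ y, ((h y : EReal)) =
      ⨆ x, ⨆ y, ((f x + h y : ℝ) : EReal) := by
  apply le_antisymm
  · apply EReal.add_le_of_forall_lt
    intro a' ha' b' hb'
    obtain ⟨x, hx⟩ := lt_iSup_iff.mp ha'
    obtain ⟨y, hy⟩ := lt_iSup_iff.mp hb'
    calc a' + b' ≤ (f x : EReal) + (h y : EReal) := add_le_add hx.le hy.le
      _ = ((f x + h y : ℝ) : EReal) := (EReal.coe_add _ _).symm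
      _ ≤ _ := le_iSup₂ (f := fun (x : α) (y : β) => ((f x + h y : ℝ) : EReal)) x y
  · refine iSup₂_le fun x y => ?_
    rw [EReal.coe_add]
    exact add_le_add (le_iSup (fun x => ((f x : EReal))) x) (le_iSup (fun y => ((h y : EReal))) y)

lemma sum_iSup_coe {ι : Type*} (s : Finset ι) (f : ι → ℝ → ℝ) :
    ∑ i ∈ s, (⨆ x : ℝ, ((f i x : EReal))) =
      ⨆ γ : ι → ℝ, ((∑ i ∈ s, f i (γ i) : ℝ) : EReal) := by
  classical
  induction s using Finset.cons_induction with
  | empty => simp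
  | cons a s ha ih =>
    rw [Finset.sum_cons, ih, iSup_coe_add_iSup_coe]
    apply le_antisymm
    · refine iSup₂_le fun x γ => ?_
      have h1 : ((f a x + ∑ i ∈ s, f i (γ i) : ℝ) : EReal) =
          ((∑ i ∈ Finset.cons a s ha, f i ((Function.update γ a x) i) : ℝ) : EReal) := by
        rw [Finset.sum_cons, Function.update_self]
        congr 2
        exact Finset.sum_congr rfl fun i hi =>
          by rw [Function.update_of_ne (ne_of_mem_of_not_mem hi ha) x γ]
      rw [h1]
      exact le_iSup (fun (γ : ι → ℝ) => ((∑ i ∈ Finset.cons a s ha, f i (γ i) : ℝ) : EReal)) _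
    · refine iSup_le fun γ => ?_
      rw [Finset.sum_cons]
      exact le_iSup₂ (f := fun (x : ℝ) (γ' : ι → ℝ) => ((f a x + ∑ i ∈ s, f i (γ' i) : ℝ) : EReal)) (γ a) γ

/-- The conjugate of the surrogate-loss regularizer equals the negated minimum expected
risk: `ψ_φ*(ρ_π − ρ_E) = −R_φ(ρ_π, ρ_E)`, where the regularizer is
`g_φ(r) = r + φ(−φ⁻¹(r))` on `T = Set.range φ`. -/
theorem psi_star_eq_neg_expected_risk
    {ι : Type*} [Fintype ι] (φ g : ℝ → ℝ) (hg : ∀ x : ℝ, g (φ x) = x)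
    (ρπ ρE : ι → ℝ) (hρπ : ∀ i, 0 ≤ ρπ i) (hρE : ∀ i, 0 ≤ ρE i) :
    (⨆ (r : ι → ℝ) (_ : ∀ i, r i ∈ Set.range φ),
        ((∑ i, ((ρE i - ρπ i) * r i - ρE i * (r i + φ (-g (r i)))) : ℝ) : EReal)) =
      ∑ i, ⨆ (γ : ℝ), ((ρπ i * (-φ γ) - ρE i * φ (-γ) : ℝ) : EReal) := by
  rw [sum_iSup_coe Finset.univ (fun i γ => ρπ i * (-φ γ) - ρE i * φ (-γ))]
  apply le_antisymm
  · refine iSup₂_le fun r hr => ?_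
    have key : ((∑ i, ((ρE i - ρπ i) * r i - ρE i * (r i + φ (-g (r i)))) : ℝ) : EReal) =
        ((∑ i, (ρπ i * (-φ ((fun i => g (r i)) i)) - ρE i * φ (-(fun i => g (r i)) i)) : ℝ)
          : EReal) := by
      congr 1
      refine Finset.sum_congr rfl fun i _ => ?_
      obtain ⟨x, hx⟩ := hr i
      have : φ (g (r i)) = r i := by rw [← hx, hg]
      simp only [this]
      ring
    rw [key]
    exact le_iSup (fun γ : ι → ℝ =>
      ((∑ i, (ρπ i * (-φ (γ i)) - ρE i * φ (-γ i)) : ℝ) : EReal)) _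
  · refine iSup_le fun γ => ?_
    have key : ((∑ i, (ρπ i * (-φ (γ i)) - ρE i * φ (-γ i)) : ℝ) : EReal) =
        ((∑ i, ((ρE i - ρπ i) * (φ (γ i)) - ρE i * ((φ (γ i)) + φ (-g (φ (γ i))))) : ℝ)
          : EReal) := by
      congr 1
      refine Finset.sum_congr rfl fun i _ => ?_
      rw [hg]
      ring
    rw [key]
    exact le_iSup₂ (f := fun (r : ι → ℝ) (_ : ∀ i, r i ∈ Set.range φ) =>
        ((∑ i, ((ρE i - ρπ i) * r i - ρE i * (r i + φ (-g (r i)))) : ℝ) : EReal))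
      (fun i => φ (γ i)) (fun i => ⟨γ i, rfl⟩)
end

section
/- Let a, b : ℝ with a > 0 and b > 0. Then a·log(a/(a+b)) + b·log(b/(a+b)) is the greatest value of the function γ ↦ −(a·log(1 + exp(−γ)) + b·log(1 + exp(γ))) over γ ∈ ℝ; that is, IsGreatest (Set.range fun γ : ℝ => −(a * Real.log (1 + Real.exp (−γ)) + b * Real.log (1 + Real.exp γ))) (a * Real.log (a/(a+b)) + b * Real.log (b/(a+b))), with the maximum attained at γ = log(a/b). -/
/-!
Substituting `p = sigmoid γ`, which ranges over `(0, 1)`, turns the objective into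
`a log p + b log (1 - p)`. By the binary Gibbs inequality (sum the tangent-line bounds for `log`
at `a / (a + b)` and `b / (a + b)`) this is maximal at `p = a / (a + b)`, i.e. at `γ = log (a / b)`.
-/

open Real

theorem Real.log_le_log_add_sub_div {x y : ℝ} (hx : 0 < x) (hy : 0 < y) :
    log x ≤ log y + (x - y) / y := by
  have h := log_le_sub_one_of_pos (div_pos hx hy)
  rw [log_div hx.ne' hy.ne'] at h
  rw [sub_div, div_self hy.ne']
  linarith

theorem Real.mul_log_add_mul_log_one_sub_le {a b p : ℝ} (ha : 0 < a) (hb : 0 < b)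
    (hp₀ : 0 < p) (hp₁ : p < 1) :
    a * log p + b * log (1 - p) ≤ a * log (a / (a + b)) + b * log (b / (a + b)) := by
  have hab : 0 < a + b := add_pos ha hb
  calc a * log p + b * log (1 - p)
      ≤ a * (log (a / (a + b)) + (p - a / (a + b)) / (a / (a + b))) +
          b * (log (b / (a + b)) + ((1 - p) - b / (a + b)) / (b / (a + b))) := by
        gcongr
        · exact log_le_log_add_sub_div hp₀ (by positivity)
        · exact log_le_log_add_sub_div (by linarith) (by positivity)
    _ = a * log (a / (a + b)) + b * log (b / (a + b)) := by
        field_simp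
        ring

theorem Real.log_one_add_exp_neg (γ : ℝ) : log (1 + exp (-γ)) = -log (sigmoid γ) := by
  rw [sigmoid_def, log_inv, neg_neg]

theorem Real.log_one_add_exp (γ : ℝ) : log (1 + exp γ) = -log (1 - sigmoid γ) := by
  rw [← sigmoid_neg, sigmoid_def, neg_neg, log_inv, neg_neg]

theorem Real.sigmoid_log_div {a b : ℝ} (ha : 0 < a) (hb : 0 < b) :
    sigmoid (log (a / b)) = a / (a + b) := by
  rw [sigmoid_def, exp_neg, exp_log (div_pos ha hb), inv_div]
  field_simp

/-- Logistic-loss computation: for `a, b > 0`, the value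
`a·log(a/(a+b)) + b·log(b/(a+b))` is the greatest value of
`γ ↦ −(a·log(1 + exp(−γ)) + b·log(1 + exp γ))` over `γ ∈ ℝ`,
attained at `γ = log(a/b)`. -/
theorem logistic_loss_supremum
    (a b : ℝ) (ha : 0 < a) (hb : 0 < b) :
    IsGreatest
        (Set.range fun γ : ℝ =>
          -(a * Real.log (1 + Real.exp (-γ)) + b * Real.log (1 + Real.exp γ)))
        (a * Real.log (a / (a + b)) + b * Real.log (b / (a + b))) ∧
      (fun γ : ℝ =>
          -(a * Real.log (1 + Real.exp (-γ)) + b * Real.log (1 + Real.exp γ)))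
          (Real.log (a / b)) =
        a * Real.log (a / (a + b)) + b * Real.log (b / (a + b)) := by
  have h_sigmoid (γ : ℝ) :
      -(a * log (1 + exp (-γ)) + b * log (1 + exp γ)) =
        a * log (sigmoid γ) + b * log (1 - sigmoid γ) := by
    rw [log_one_add_exp_neg, log_one_add_exp]
    ring
  have h_attained :
      -(a * log (1 + exp (-log (a / b))) + b * log (1 + exp (log (a / b)))) =
        a * log (a / (a + b)) + b * log (b / (a + b)) := by
    rw [h_sigmoid, sigmoid_log_div ha hb, one_sub_div (add_pos ha hb).ne', add_sub_cancel_left]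
  refine ⟨⟨⟨log (a / b), h_attained⟩, ?_⟩, h_attained⟩
  rintro _ ⟨γ, rfl⟩
  exact (h_sigmoid γ).trans_le
    (mul_log_add_mul_log_one_sub_le ha hb (sigmoid_pos γ) (sigmoid_lt_one γ))
end

section
/- Let ι be a finite type and p, q : ι → ℝ with p(i) > 0 and q(i) > 0 for all i. Then ∑_i ( p(i)·log(p(i)/(p(i)+q(i))) + q(i)·log(q(i)/(p(i)+q(i))) ) is the greatest value of ∑_i ( p(i)·log(D(i)) + q(i)·log(1−D(i)) ) over all functions D : ι → ℝ with D(i) ∈ (0,1) for every i; that is, IsGreatest { ∑ i, (p i * Real.log (D i) + q i * Real.log (1 − D i)) | D : ι → ℝ, ∀ i, D i ∈ Set.Ioo 0 1 } (∑ i, (p i * Real.log (p i/(p i + q i)) + q i * Real.log (q i/(p i + q i)))), with the maximum attained at D(i) = p(i)/(p(i)+q(i)). -/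
/-!
Pointwise in `i`, the function `x ↦ p log x + q log (1 - x)` is maximised on `(0, 1)` at
`x = p / (p + q)`: by `log t ≤ t - 1`, for `x + y ≤ 1` and `s = a + b` we get
`a log x + b log y ≤ a log (a / s) + b log (b / s) + s (x + y) - s`, and the last two terms
contribute at most `0`. Summing over `i` gives the bound, attained by the optimal discriminator.
-/

open Real

theorem mul_log_le_mul_log_div_add {a s x : ℝ} (ha : 0 < a) (hs : 0 < s) (hx : 0 < x) :
    a * log x ≤ a * log (a / s) + (s * x - a) := by
  have hlog : log x - log (a / s) = log (s * x / a) := by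
    rw [log_div (by positivity) ha.ne', log_mul hs.ne' hx.ne', log_div ha.ne' hs.ne']
    ring
  have hle : a * log (s * x / a) ≤ s * x - a := by
    calc a * log (s * x / a) ≤ a * (s * x / a - 1) :=
          mul_le_mul_of_nonneg_left (log_le_sub_one_of_pos (by positivity)) ha.le
      _ = s * x - a := by field_simp
  rw [← hlog, mul_sub] at hle
  linarith

theorem mul_log_add_mul_log_le {a b x y : ℝ} (ha : 0 < a) (hb : 0 < b) (hx : 0 < x) (hy : 0 < y)
    (hxy : x + y ≤ 1) :
    a * log x + b * log y ≤ a * log (a / (a + b)) + b * log (b / (a + b)) := by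
  have hab : 0 < a + b := add_pos ha hb
  have hx' := mul_log_le_mul_log_div_add ha hab hx
  have hy' := mul_log_le_mul_log_div_add hb hab hy
  nlinarith

theorem div_add_mem_Ioo {a b : ℝ} (ha : 0 < a) (hb : 0 < b) : a / (a + b) ∈ Set.Ioo 0 1 :=
  ⟨by positivity, (div_lt_one (add_pos ha hb)).2 (lt_add_of_pos_right a hb)⟩

theorem one_sub_div_add {a b : ℝ} (hab : a + b ≠ 0) : 1 - a / (a + b) = b / (a + b) := by
  rw [one_sub_div hab, add_sub_cancel_left]

/-- The optimization `max_D E_π[log D] + E_{π_E}[log(1−D)]` over discriminators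
`D : ι → (0,1)` is attained by the optimal discriminator `D(i) = p(i)/(p(i)+q(i))`,
and its optimal value is `∑ i, p i·log(p i/(p i+q i)) + q i·log(q i/(p i+q i))`. -/
theorem optimal_discriminator_sum
    {ι : Type*} [Fintype ι] (p q : ι → ℝ) (hp : ∀ i, 0 < p i) (hq : ∀ i, 0 < q i) :
    IsGreatest
        {x : ℝ | ∃ D : ι → ℝ, (∀ i, D i ∈ Set.Ioo (0 : ℝ) 1) ∧
          x = ∑ i, (p i * Real.log (D i) + q i * Real.log (1 - D i))}
        (∑ i, (p i * Real.log (p i / (p i + q i)) +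
          q i * Real.log (q i / (p i + q i)))) ∧
      ∑ i, (p i * Real.log (p i / (p i + q i)) +
          q i * Real.log (1 - p i / (p i + q i))) =
        ∑ i, (p i * Real.log (p i / (p i + q i)) +
          q i * Real.log (q i / (p i + q i))) := by
  have hcompl (i : ι) : 1 - p i / (p i + q i) = q i / (p i + q i) :=
    one_sub_div_add (add_pos (hp i) (hq i)).ne'
  refine ⟨⟨⟨fun i ↦ p i / (p i + q i), fun i ↦ div_add_mem_Ioo (hp i) (hq i),
    by simp only [hcompl]⟩, ?_⟩, by simp only [hcompl]⟩
  rintro x ⟨D, hD, rfl⟩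
  refine Finset.sum_le_sum fun i _ ↦ ?_
  obtain ⟨hD0, hD1⟩ := hD i
  exact mul_log_add_mul_log_le (hp i) (hq i) hD0 (sub_pos.2 hD1) (by linarith)
end
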